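/- Let q(z) = z² be the squaring map on a disk B(0, r). For any measurable E ⊆ B(0, r²), if λ(E)/λ(B(0,r²)) ≤ 1 − ε with ε > 0, then λ(q^{−1}(E) ∩ B(0,r))/λ(B(0,r)) ≤ 1 − ε' for some ε' > 0 depending only on ε. -/

import Mathlib

open MeasureTheory

private lemma sq_deriv_det (z : ℂ) :
    (((ContinuousLinearMap.smulRight (1 : ℂ →L[ℂ] ℂ) (2 * z)).restrictScalars ℝ)).det
      = Complex.normSq (2 * z) := by
  have h : (((ContinuousLinearMap.smulRight (1 : ℂ →L[ℂ] ℂ) (2 * z)).restrictScalars ℝ)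
      : ℂ →ₗ[ℝ] ℂ) = Algebra.lmul ℝ ℂ (2 * z) := by
    apply LinearMap.ext
    intro w
    simp [mul_comm]
  rw [ContinuousLinearMap.det, h]
  exact Algebra.norm_complex_apply (2 * z)

/-- The squaring map on a disk does not expand the density of thin sets too
much: if λ(E)/λ(B(0,r²)) ≤ 1 − ε then λ(q⁻¹(E) ∩ B(0,r))/λ(B(0,r)) ≤ 1 − ε'
with ε' > 0 depending only on ε. -/
theorem squaring_map_density_bound :
    ∀ ε : ℝ, 0 < ε → ε ≤ 1 → ∃ ε' : ℝ, 0 < ε' ∧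
      ∀ r : ℝ, 0 < r → ∀ E : Set ℂ, MeasurableSet E → E ⊆ Metric.ball 0 (r ^ 2) →
        volume E ≤ ENNReal.ofReal (1 - ε) * volume (Metric.ball (0 : ℂ) (r ^ 2)) →
        volume ({z : ℂ | z ^ 2 ∈ E} ∩ Metric.ball 0 r) ≤
          ENNReal.ofReal (1 - ε') * volume (Metric.ball (0 : ℂ) r) := by
  intro ε hε hε1
  refine ⟨ε / 4, by positivity, ?_⟩
  intro r hr E hEmeas hEsub hEvol
  set q : ℂ → ℂ := fun z => z ^ 2 with hq
  set F : Set ℂ := Metric.ball 0 (r ^ 2) \ E with hF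
  have hFmeas : MeasurableSet F := measurableSet_ball.diff hEmeas
  have hballfin : volume (Metric.ball (0 : ℂ) (r ^ 2)) ≠ ⊤ :=
    measure_ball_lt_top.ne
  have hEfin : volume E ≠ ⊤ := ne_top_of_le_ne_top hballfin (measure_mono hEsub)
  -- volume of F
  have hFvol : volume F = volume (Metric.ball (0 : ℂ) (r ^ 2)) - volume E :=
    measure_diff hEsub hEmeas.nullMeasurableSet hEfin
  have hFlower : ENNReal.ofReal ε * volume (Metric.ball (0 : ℂ) (r ^ 2)) ≤ volume F := by
    rw [hFvol]
    have hsplit : ENNReal.ofReal ε * volume (Metric.ball (0 : ℂ) (r ^ 2)) +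
        ENNReal.ofReal (1 - ε) * volume (Metric.ball (0 : ℂ) (r ^ 2)) =
        volume (Metric.ball (0 : ℂ) (r ^ 2)) := by
      rw [← add_mul, ← ENNReal.ofReal_add (le_of_lt hε) (by linarith)]
      norm_num
    calc ENNReal.ofReal ε * volume (Metric.ball (0 : ℂ) (r ^ 2))
        = (ENNReal.ofReal ε * volume (Metric.ball (0 : ℂ) (r ^ 2)) +
            ENNReal.ofReal (1 - ε) * volume (Metric.ball (0 : ℂ) (r ^ 2))) -
            ENNReal.ofReal (1 - ε) * volume (Metric.ball (0 : ℂ) (r ^ 2)) := by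
          rw [ENNReal.add_sub_cancel_right (ne_top_of_le_ne_top hballfin
            (le_trans (le_of_eq rfl) (by
              calc ENNReal.ofReal (1 - ε) * volume (Metric.ball (0 : ℂ) (r ^ 2))
                  ≤ 1 * volume (Metric.ball (0 : ℂ) (r ^ 2)) := by
                    gcongr; exact ENNReal.ofReal_le_one.2 (by linarith)
                _ = volume (Metric.ball (0 : ℂ) (r ^ 2)) := one_mul _)))]
      _ ≤ volume (Metric.ball (0 : ℂ) (r ^ 2)) - volume E := by
          rw [hsplit]; exact tsub_le_tsub_left hEvol _
  -- the preimage of F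
  set A : Set ℂ := {z : ℂ | z ^ 2 ∈ F} ∩ Metric.ball 0 r with hA
  have hAmeas : MeasurableSet A :=
    (hFmeas.preimage (measurable_id.pow_const 2)).inter measurableSet_ball
  have hAsub : A ⊆ Metric.ball 0 r := Set.inter_subset_right
  -- F is covered by the image of A
  have himage : F ⊆ q '' A := by
    intro w hw
    have hwball : w ∈ Metric.ball (0 : ℂ) (r ^ 2) := hw.1
    rw [Metric.mem_ball, dist_zero_right] at hwball
    set z : ℂ := w ^ (((2 : ℕ) : ℂ))⁻¹ with hz
    have hz2 : z ^ 2 = w := Complex.cpow_nat_inv_pow w (n := 2) (by norm_num)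
    refine ⟨z, ⟨?_, ?_⟩, hz2⟩
    · simpa [hz2] using hw
    · rw [Metric.mem_ball, dist_zero_right]
      have hzsq : ‖z‖ ^ 2 = ‖w‖ := by rw [← norm_pow, hz2]
      nlinarith [norm_nonneg z, norm_nonneg w]
  -- derivative bound
  have hderiv : ∀ z ∈ A, HasFDerivWithinAt q
      ((ContinuousLinearMap.smulRight (1 : ℂ →L[ℂ] ℂ) (2 * z)).restrictScalars ℝ) A z := by
    intro z _
    have h1 : HasDerivAt (fun z : ℂ => z ^ 2) (2 * z) z := by
      simpa using hasDerivAt_pow 2 z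
    exact (h1.hasFDerivAt.restrictScalars ℝ).hasFDerivWithinAt
  have himq : volume F ≤ ∫⁻ z in A, ENNReal.ofReal
      |(((ContinuousLinearMap.smulRight (1 : ℂ →L[ℂ] ℂ) (2 * z)).restrictScalars ℝ)).det| := by
    refine le_trans (measure_mono himage) ?_
    exact addHaar_image_le_lintegral_abs_det_fderiv volume hAmeas hderiv
  have hbound : (∫⁻ z in A, ENNReal.ofReal
      |(((ContinuousLinearMap.smulRight (1 : ℂ →L[ℂ] ℂ) (2 * z)).restrictScalars ℝ)).det|)
      ≤ ENNReal.ofReal (4 * r ^ 2) * volume A := by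
    rw [← setLIntegral_const A (ENNReal.ofReal (4 * r ^ 2))]
    refine setLIntegral_mono' hAmeas ?_
    intro z hz
    rw [sq_deriv_det]
    apply ENNReal.ofReal_le_ofReal
    have hzr : ‖z‖ < r := by
      have := hAsub hz
      rwa [Metric.mem_ball, dist_zero_right] at this
    have h1 : Complex.normSq (2 * z) = 4 * ‖z‖ ^ 2 := by
      rw [Complex.normSq_mul, Complex.normSq_eq_norm_sq, Complex.normSq_eq_norm_sq]
      norm_num
    rw [abs_of_nonneg (Complex.normSq_nonneg _), h1]
    nlinarith [norm_nonneg z]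
  -- lower bound on volume A
  have hAlower : ENNReal.ofReal (ε / 4 * r ^ 2) * NNReal.pi ≤ volume A := by
    rw [← ENNReal.mul_le_mul_iff_right (a := ENNReal.ofReal (4 * r ^ 2)) (by positivity)
      ENNReal.ofReal_ne_top]
    calc ENNReal.ofReal (4 * r ^ 2) * (ENNReal.ofReal (ε / 4 * r ^ 2) * NNReal.pi)
        = ENNReal.ofReal ε * volume (Metric.ball (0 : ℂ) (r ^ 2)) := by
          rw [Complex.volume_ball, ← ENNReal.ofReal_pow (by positivity)]
          rw [show ENNReal.ofReal ε * (ENNReal.ofReal ((r ^ 2) ^ 2) * (NNReal.pi : ENNReal))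
              = ENNReal.ofReal (ε * (r ^ 2) ^ 2) * NNReal.pi from by
            rw [← mul_assoc, ← ENNReal.ofReal_mul hε.le]]
          rw [show ENNReal.ofReal (4 * r ^ 2) *
              (ENNReal.ofReal (ε / 4 * r ^ 2) * (NNReal.pi : ENNReal))
              = ENNReal.ofReal (4 * r ^ 2 * (ε / 4 * r ^ 2)) * NNReal.pi from by
            rw [← mul_assoc, ← ENNReal.ofReal_mul (by positivity)]]
          congr 2
          ring
      _ ≤ volume F := hFlower
      _ ≤ _ := le_trans himq hbound
  -- decompose the ball
  have hdecomp : {z : ℂ | z ^ 2 ∈ E} ∩ Metric.ball 0 r = Metric.ball 0 r \ A := by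
    ext z
    simp only [hA, hF, Set.mem_inter_iff, Set.mem_setOf_eq, Set.mem_diff, Metric.mem_ball,
      dist_zero_right]
    constructor
    · rintro ⟨hzE, hzr⟩
      exact ⟨hzr, fun h => h.1.2 hzE⟩
    · rintro ⟨hzr, h⟩
      refine ⟨?_, hzr⟩
      by_contra hne
      refine h ⟨⟨?_, hne⟩, hzr⟩
      rw [norm_pow]
      nlinarith [norm_nonneg z]
  rw [hdecomp, measure_diff hAsub hAmeas.nullMeasurableSet
    (ne_top_of_le_ne_top measure_ball_lt_top.ne (measure_mono hAsub))]
  calc volume (Metric.ball (0 : ℂ) r) - volume A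
      ≤ volume (Metric.ball (0 : ℂ) r) - ENNReal.ofReal (ε / 4 * r ^ 2) * NNReal.pi :=
        tsub_le_tsub_left hAlower _
    _ = ENNReal.ofReal (1 - ε / 4) * volume (Metric.ball (0 : ℂ) r) := by
        rw [Complex.volume_ball, ← ENNReal.ofReal_pow (le_of_lt hr)]
        rw [show ENNReal.ofReal (1 - ε / 4) * (ENNReal.ofReal (r ^ 2) * (NNReal.pi : ENNReal))
            = ENNReal.ofReal ((1 - ε / 4) * r ^ 2) * NNReal.pi from by
          rw [← mul_assoc, ← ENNReal.ofReal_mul (by linarith)]]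
        rw [← ENNReal.sub_mul (fun _ _ => ENNReal.coe_ne_top),
          ← ENNReal.ofReal_sub _ (by positivity)]
        congr 2
        ring
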